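/- Let ℓ ≥ 2 and let g be a kernel of ℓ dimensions. Fix k ∈ {0,…,ℓ−2} and define the kernel g̃ by g̃(v_0,…,v_{ℓ−1}) = g(v_0,…,v_{k−1}, v_{k+1}, v_k, v_{k+2},…,v_{ℓ−1}) (input coordinates k and k+1 swapped). If D_g(k) > D_g(k+1), then D_{g̃}(k) = D_g(k+1). -/
import Mathlib


/-- The `i`-th partial distance of a kernel `g` of `ℓ` dimensions:
`D_g(i) = min { d_H(g(w•0•u), g(w•1•v)) : w ∈ {0,1}^i, u, v ∈ {0,1}^{ℓ−1−i} }`,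
phrased via pairs of inputs that agree on coordinates `< i` and differ as `0`/`1`
at coordinate `i`. -/
noncomputable def partialDist {ℓ : ℕ} (g : (Fin ℓ → ZMod 2) → (Fin ℓ → ZMod 2)) (i : ℕ) : ℕ :=
  sInf { d | ∃ x y : Fin ℓ → ZMod 2,
    (∀ j : Fin ℓ, (j : ℕ) < i → x j = y j) ∧
    (∀ j : Fin ℓ, (j : ℕ) = i → x j = 0 ∧ y j = 1) ∧
    d = hammingDist (g x) (g y) }

theorem swap_partialDist_eq {ℓ : ℕ} (hℓ : 2 ≤ ℓ)
    (g : (Fin ℓ → ZMod 2) → (Fin ℓ → ZMod 2)) (hg : Function.Bijective g)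
    (k : ℕ) (hk : k ≤ ℓ - 2)
    (g' : (Fin ℓ → ZMod 2) → (Fin ℓ → ZMod 2))
    (hg' : ∀ v, g' v =
      g (v ∘ ⇑(Equiv.swap (⟨k, by omega⟩ : Fin ℓ) (⟨k + 1, by omega⟩ : Fin ℓ))))
    (hgt : partialDist g (k + 1) < partialDist g k) :
    partialDist g' k = partialDist g (k + 1) := by
  have hk1 : k + 1 < ℓ := by omega
  have hk0 : k < ℓ := by omega
  set i0 : Fin ℓ := ⟨k, hk0⟩ with hi0
  set i1 : Fin ℓ := ⟨k + 1, hk1⟩ with hi1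
  set e : Equiv.Perm (Fin ℓ) := Equiv.swap i0 i1 with he
  have hg2 : ∀ v, g' v = g (v ∘ ⇑e) := hg'
  have helt : ∀ j : Fin ℓ, (j : ℕ) < k → e j = j := by
    intro j hj
    exact Equiv.swap_apply_of_ne_of_ne
      (Fin.ne_of_val_ne (show (j : ℕ) ≠ k by omega))
      (Fin.ne_of_val_ne (show (j : ℕ) ≠ k + 1 by omega))
  have he0 : e i0 = i1 := Equiv.swap_apply_left _ _
  have he1 : e i1 = i0 := Equiv.swap_apply_right _ _
  have hcomp : ∀ v : Fin ℓ → ZMod 2, (v ∘ ⇑e) ∘ ⇑e = v := by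
    intro v; funext j
    simp [Function.comp, he, Equiv.swap_apply_self]
  set S0 := { d | ∃ x y : Fin ℓ → ZMod 2,
    (∀ j : Fin ℓ, (j : ℕ) < k → x j = y j) ∧
    (∀ j : Fin ℓ, (j : ℕ) = k → x j = 0 ∧ y j = 1) ∧
    d = hammingDist (g x) (g y) } with hS0
  set S1 := { d | ∃ x y : Fin ℓ → ZMod 2,
    (∀ j : Fin ℓ, (j : ℕ) < k + 1 → x j = y j) ∧
    (∀ j : Fin ℓ, (j : ℕ) = k + 1 → x j = 0 ∧ y j = 1) ∧
    d = hammingDist (g x) (g y) } with hS1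
  set S' := { d | ∃ x y : Fin ℓ → ZMod 2,
    (∀ j : Fin ℓ, (j : ℕ) < k → x j = y j) ∧
    (∀ j : Fin ℓ, (j : ℕ) = k → x j = 0 ∧ y j = 1) ∧
    d = hammingDist (g' x) (g' y) } with hS'
  have hPD' : partialDist g' k = sInf S' := rfl
  have hPD1 : partialDist g (k + 1) = sInf S1 := rfl
  have hPD0 : partialDist g k = sInf S0 := rfl
  -- S1 is nonempty
  have hne1 : S1.Nonempty := by
    refine ⟨_, (fun _ => 0), (fun j => if (j : ℕ) = k + 1 then 1 else 0), ?_, ?_, rfl⟩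
    · intro j hj
      show (0 : ZMod 2) = if (j : ℕ) = k + 1 then 1 else 0
      rw [if_neg (by omega)]
    · intro j hj
      refine ⟨rfl, ?_⟩
      show (if (j : ℕ) = k + 1 then (1 : ZMod 2) else 0) = 1
      rw [if_pos hj]
  -- S1 ⊆ S'
  have hsub : S1 ⊆ S' := by
    rintro d ⟨X, Y, h1, h2, h3⟩
    refine ⟨X ∘ ⇑e, Y ∘ ⇑e, ?_, ?_, ?_⟩
    · intro j hj
      simp only [Function.comp_apply, helt j hj]
      exact h1 j (by omega)
    · intro j hj
      have : j = i0 := Fin.ext (show (j : ℕ) = k from hj)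
      subst this
      simp only [Function.comp_apply, he0]
      exact h2 i1 rfl
    · rw [hg2, hg2, hcomp, hcomp]; exact h3
  -- lower bound on S'
  have hlb : ∀ d ∈ S', sInf S1 ≤ d := by
    rintro d ⟨x, y, h1, h2, h3⟩
    set X := x ∘ ⇑e with hX
    set Y := y ∘ ⇑e with hY
    have hd : d = hammingDist (g X) (g Y) := by
      rw [h3, hg2, hg2]
    have hXlt : ∀ j : Fin ℓ, (j : ℕ) < k → X j = Y j := by
      intro j hj
      simp only [hX, hY, Function.comp_apply, helt j hj]
      exact h1 j hj
    have hX1 : X i1 = 0 := by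
      simp only [hX, Function.comp_apply, he1]
      exact (h2 i0 rfl).1
    have hY1 : Y i1 = 1 := by
      simp only [hY, Function.comp_apply, he1]
      exact (h2 i0 rfl).2
    by_cases hcase : X i0 = Y i0
    · -- pair for D_g(k+1)
      apply Nat.sInf_le
      refine ⟨X, Y, ?_, ?_, hd⟩
      · intro j hj
        rcases Nat.lt_or_ge (j : ℕ) k with h | h
        · exact hXlt j h
        · have : j = i0 := Fin.ext (show (j : ℕ) = k by omega)
          subst this; exact hcase
      · intro j hj
        have : j = i1 := Fin.ext (show (j : ℕ) = k + 1 from hj)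
        subst this; exact ⟨hX1, hY1⟩
    · -- pair for D_g(k); use hgt
      have hzmod : ∀ a : ZMod 2, a = 0 ∨ a = 1 := by decide
      have hS0mem : d ∈ S0 := by
        rcases hzmod (X i0) with hx0 | hx0
        · have hy0 : Y i0 = 1 := by
            rcases hzmod (Y i0) with h | h
            · exact absurd (hx0.trans h.symm) hcase
            · exact h
          exact ⟨X, Y, hXlt, fun j hj => by
            have : j = i0 := Fin.ext (show (j : ℕ) = k from hj)
            subst this; exact ⟨hx0, hy0⟩, hd⟩
        · have hy0 : Y i0 = 0 := by
            rcases hzmod (Y i0) with h | h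
            · exact h
            · exact absurd (hx0.trans h.symm) hcase
          refine ⟨Y, X, fun j hj => (hXlt j hj).symm, fun j hj => by
            have : j = i0 := Fin.ext (show (j : ℕ) = k from hj)
            subst this; exact ⟨hy0, hx0⟩, ?_⟩
          rw [hd, hammingDist_comm]
      have : sInf S0 ≤ d := Nat.sInf_le hS0mem
      omega
  rw [hPD', hPD1]
  apply le_antisymm
  · exact Nat.sInf_le (hsub (Nat.sInf_mem hne1))
  · exact le_csInf ⟨_, hsub (Nat.sInf_mem hne1)⟩ hlb
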